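/- Let H be an n×n complex Hermitian matrix and let λ be an eigenvalue of H of algebraic multiplicity s ≥ 1. Then there exists an orthonormal family u : Fin s → (Fin n → ℂ) (i.e. ∑_i conj(u k i)·(u l i) = 1 if k = l and 0 otherwise) with H.mulVec (u k) = λ • (u k) for each k, such that D_s(λ·1 − H) = c • ∑_{k} vecMulVec (u k) (star (u k)), where c = ∏_{μ} (λ − μ), the product running over the multiset of roots of the characteristic polynomial of H different from λ (counted with multiplicity; there are n − s of them). In particular D_s(λ·1 − H) has rank exactly s, and its columns span the λ-eigenspace of H. -/

import Mathlib

open scoped ComplexConjugate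

/-- The reduced order-one complement of order `s` of an `n×n` matrix `A`:
the matrix whose `(i,j)` entry is the coefficient of `z^(n-s)` in the `(i,j)` entry
of `adjugate (1 + z • A)`, computed over the polynomial ring `R[z]`. -/
noncomputable def redComp {R : Type*} [CommRing R] {n : ℕ} (s : ℕ)
    (A : Matrix (Fin n) (Fin n) R) : Matrix (Fin n) (Fin n) R :=
  Matrix.of fun i j =>
    (((1 + (Polynomial.X : Polynomial R) • A.map (fun a => Polynomial.C a) :
        Matrix (Fin n) (Fin n) (Polynomial R)).adjugate) i j).coeff (n - s)

/-!
Diagonalise `H = U D Uᴴ` with `U` unitary. `redComp` commutes with conjugation by `U`, and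
for `diagonal a` the adjugate of `1 + z • diagonal a` is diagonal with entries
`∏_{j ≠ i} (1 + a_j z)`. When exactly `s` of the `a_j = λ - μ_j` vanish, the coefficient of
`z^(n-s)` in that product is `c = ∏_{a_j ≠ 0} a_j` if `a_i = 0` and `0` otherwise (the degree
is too small). Hence `D_s(λ - H) = c • V Vᴴ`, where the columns of `V` are the eigenvectors of
`H` for `λ`. As `Vᴴ V = 1`, the column space of `V Vᴴ` is that of `V`, of dimension `s`; it
fills the eigenspace because the geometric multiplicity is at most the algebraic one.
-/

open Matrix Polynomial Finset
open scoped ComplexOrder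

namespace Polynomial

variable {R : Type*} [CommRing R] {ι : Type*}

theorem natDegree_one_add_C_mul_X_le (a : R) : (1 + C a * X).natDegree ≤ 1 := by
  rw [add_comm, ← C_1]
  exact natDegree_linear_le

theorem coeff_prod_one_add_C_mul_X_card (T : Finset ι) (a : ι → R) :
    (∏ j ∈ T, (1 + C (a j) * X)).coeff #T = ∏ j ∈ T, a j := by
  simpa [coeff_one] using coeff_prod_of_natDegree_le (s := T) (fun j => 1 + C (a j) * X) 1
    (fun j _ => natDegree_one_add_C_mul_X_le (a j))

theorem coeff_prod_one_add_C_mul_X_of_card_lt (T : Finset ι) (a : ι → R) {m : ℕ}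
    (hm : #T < m) : (∏ j ∈ T, (1 + C (a j) * X)).coeff m = 0 := by
  have hdeg : (∏ j ∈ T, (1 + C (a j) * X)).natDegree ≤ #T := by
    refine (natDegree_prod_le T _).trans ?_
    simpa using sum_le_card_nsmul T _ 1 fun j _ => natDegree_one_add_C_mul_X_le (a j)
  exact coeff_eq_zero_of_natDegree_lt (hdeg.trans_lt hm)

end Polynomial

namespace Matrix

variable {n : Type*} [Fintype n] [DecidableEq n] {R : Type*} [CommRing R]

theorem adjugate_eq_det_smul_of_mul_eq_one {P Q : Matrix n n R} (h : Q * P = 1) :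
    P.adjugate = P.det • Q :=
  calc P.adjugate = Q * (P * P.adjugate) := by rw [← Matrix.mul_assoc, h, Matrix.one_mul]
    _ = P.det • Q := by rw [mul_adjugate, Matrix.mul_smul, Matrix.mul_one]

theorem adjugate_mul_mul_of_mul_eq_one {P Q : Matrix n n R} (hPQ : P * Q = 1) (hQP : Q * P = 1)
    (A : Matrix n n R) : (P * A * Q).adjugate = P * A.adjugate * Q := by
  have hdet : P.det * Q.det = 1 := by rw [← det_mul, hPQ, det_one]
  rw [adjugate_mul_distrib, adjugate_mul_distrib, adjugate_eq_det_smul_of_mul_eq_one hQP,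
    adjugate_eq_det_smul_of_mul_eq_one hPQ]
  simp only [Matrix.smul_mul, Matrix.mul_smul, smul_smul, hdet, one_smul, Matrix.mul_assoc]

end Matrix

section RedComp

variable {R : Type*} [CommRing R] {n : ℕ}

theorem redComp_eq_coeff_matPolyEquiv (s : ℕ) (A : Matrix (Fin n) (Fin n) R) :
    redComp s A = (matPolyEquiv (1 + (X : R[X]) • A.map C).adjugate).coeff (n - s) := by
  ext i j
  rw [matPolyEquiv_coeff_apply]
  rfl

theorem redComp_mul_mul (s : ℕ) {P Q : Matrix (Fin n) (Fin n) R} (hPQ : P * Q = 1)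
    (hQP : Q * P = 1) (A : Matrix (Fin n) (Fin n) R) :
    redComp s (P * A * Q) = P * redComp s A * Q := by
  have hmap : ∀ {M N : Matrix (Fin n) (Fin n) R}, M * N = 1 →
      M.map C * N.map C = (1 : Matrix (Fin n) (Fin n) R[X]) :=
    fun h => by rw [← Matrix.map_mul, h, Matrix.map_one _ (map_zero C) (map_one C)]
  have hconj : (1 + (X : R[X]) • (P * A * Q).map C : Matrix (Fin n) (Fin n) R[X]) =
      P.map C * (1 + (X : R[X]) • A.map C) * Q.map C := by
    rw [Matrix.mul_add, Matrix.add_mul, Matrix.mul_one, hmap hPQ, Matrix.mul_smul, Matrix.smul_mul,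
      Matrix.map_mul, Matrix.map_mul]
  rw [redComp_eq_coeff_matPolyEquiv, redComp_eq_coeff_matPolyEquiv, hconj,
    adjugate_mul_mul_of_mul_eq_one (hmap hPQ) (hmap hQP), map_mul, map_mul, matPolyEquiv_map_C,
    matPolyEquiv_map_C, coeff_mul_C, coeff_C_mul]

theorem redComp_diagonal (s : ℕ) (a : Fin n → R) :
    redComp s (diagonal a) =
      diagonal fun i => (∏ j ∈ univ.erase i, (1 + C (a j) * X)).coeff (n - s) := by
  have h : (1 + (X : R[X]) • (diagonal a).map C : Matrix (Fin n) (Fin n) R[X]) =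
      diagonal fun i => 1 + C (a i) * X := by
    rw [diagonal_map (map_zero C), ← diagonal_smul, ← diagonal_one, diagonal_add]
    simp only [Pi.smul_apply, smul_eq_mul, mul_comm X]
  ext i j
  rw [redComp_eq_coeff_matPolyEquiv, h, adjugate_diagonal, matPolyEquiv_coeff_apply]
  by_cases hij : i = j <;> simp [hij]

theorem redComp_diagonal_eq_smul [DecidableEq R] (s : ℕ) (a : Fin n → R)
    (hs : #{i | a i = 0} = s) :
    redComp s (diagonal a) =
      (∏ j with a j ≠ 0, a j) • diagonal fun i => if a i = 0 then 1 else 0 := by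
  have hcard : #{j | a j ≠ 0} = n - s := by
    have := card_filter_add_card_filter_not (s := univ) fun i => a i = 0
    simp only [card_univ, Fintype.card_fin, hs, ne_eq] at this ⊢
    omega
  have hprod : ∀ i, ∏ j ∈ univ.erase i, (1 + C (a j) * X) =
      ∏ j ∈ ({j | a j ≠ 0} : Finset (Fin n)).erase i, (1 + C (a j) * X) := by
    intro i
    rw [← prod_filter_of_ne (p := fun j => a j ≠ 0) fun j _ h ha => h (by simp [ha]),
      filter_erase]
  rw [redComp_diagonal, ← diagonal_smul]
  congr 1
  ext i
  rw [hprod]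
  by_cases hi : a i = 0
  · rw [erase_eq_of_notMem (by simp [hi]), ← hcard, coeff_prod_one_add_C_mul_X_card]
    simp [hi]
  · rw [← hcard, coeff_prod_one_add_C_mul_X_of_card_lt _ _ (card_erase_lt_of_mem (by simp [hi]))]
    simp [hi]

end RedComp

namespace Matrix

variable {l m o k : Type*} [Fintype m] [Fintype k]

theorem mul_eq_sum_vecMulVec {α : Type*} [NonUnitalNonAssocSemiring α] (A : Matrix l m α)
    (B : Matrix m o α) : A * B = ∑ j, vecMulVec (A.col j) (B.row j) := by
  ext i i'
  simp [mul_apply, sum_apply, vecMulVec_apply]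

theorem mul_diagonal_ite_mul [DecidableEq m] {α : Type*} [NonAssocSemiring α] (p : m → Prop)
    [DecidablePred p] (e : k ≃ {i // p i}) (A : Matrix l m α) (B : Matrix m o α) :
    A * diagonal (fun i => if p i then (1 : α) else 0) * B =
      A.submatrix id (fun j => (e j : m)) * B.submatrix (fun j => (e j : m)) id := by
  ext i i'
  rw [mul_apply, mul_apply]
  simp only [mul_diagonal, submatrix_apply, id, mul_ite, mul_one, mul_zero, ite_mul, zero_mul]
  rw [← sum_filter, ← sum_subtype_eq_sum_filter, subtype_univ, ← e.sum_comp]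

theorem span_range_col_smul {K : Type*} [Field K] (M : Matrix l m K) {c : K} (hc : c ≠ 0) :
    Submodule.span K (Set.range (c • M).col) = Submodule.span K (Set.range M.col) := by
  have hlin : (c • M).mulVecLin = c • M.mulVecLin := LinearMap.ext fun x => smul_mulVec c M x
  rw [← range_mulVecLin, ← range_mulVecLin, hlin, LinearMap.range_smul _ _ hc]

theorem span_range_col_mul_conjTranspose [DecidableEq k] {R : Type*} [CommRing R] [StarRing R]
    {V : Matrix m k R} (hV : Vᴴ * V = 1) :
    Submodule.span R (Set.range (V * Vᴴ).col) = Submodule.span R (Set.range V.col) := by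
  have hsurj : LinearMap.range Vᴴ.mulVecLin = ⊤ :=
    LinearMap.range_eq_top.mpr fun x =>
      ⟨V *ᵥ x, by rw [mulVecLin_apply, mulVec_mulVec, hV, one_mulVec]⟩
  rw [← range_mulVecLin, ← range_mulVecLin, mulVecLin_mul,
    LinearMap.range_comp_of_range_eq_top _ hsurj]

theorem rank_eq_card_of_conjTranspose_mul_self_eq_one {R : Type*} [Field R] [PartialOrder R]
    [StarRing R] [StarOrderedRing R] [DecidableEq k] {V : Matrix m k R} (hV : Vᴴ * V = 1) :
    V.rank = Fintype.card k := by
  rw [← rank_conjTranspose_mul_self, hV, rank_one]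

theorem span_range_col_eq_eigenspace [DecidableEq m] [DecidableEq k] {R : Type*} [Field R]
    [PartialOrder R] [StarRing R] [StarOrderedRing R]
    {A : Matrix m m R} {V : Matrix m k R} {μ : R} (hV : Vᴴ * V = 1)
    (hAV : ∀ j, A *ᵥ V.col j = μ • V.col j)
    (hμ : A.charpoly.rootMultiplicity μ ≤ Fintype.card k) :
    Submodule.span R (Set.range V.col) = Module.End.eigenspace A.mulVecLin μ := by
  refine Submodule.eq_of_le_of_finrank_le (Submodule.span_le.mpr ?_) ?_
  · rintro _ ⟨j, rfl⟩
    exact Module.End.mem_eigenspace_iff.mpr (hAV j)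
  · calc Module.finrank R (Module.End.eigenspace A.mulVecLin μ)
        ≤ A.mulVecLin.charpoly.rootMultiplicity μ := LinearMap.finrank_eigenspace_le _ _
      _ ≤ V.rank := by rwa [charpoly_mulVecLin, rank_eq_card_of_conjTranspose_mul_self_eq_one hV]
      _ = _ := rank_eq_finrank_span_cols V

end Matrix

namespace Matrix.IsHermitian

variable {n : Type*} [Fintype n] [DecidableEq n] {𝕜 : Type*} [RCLike 𝕜] {A : Matrix n n 𝕜}

theorem card_eigenvalues_eq_rootMultiplicity (hA : A.IsHermitian) (μ : 𝕜) :
    #{i | (hA.eigenvalues i : 𝕜) = μ} = A.charpoly.rootMultiplicity μ := by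
  rw [← count_roots, hA.roots_charpoly_eq_eigenvalues, Multiset.count_map, card_def, filter_val]
  simp_rw [Function.comp_apply, eq_comm]

theorem prod_map_sub_filter_roots_charpoly [DecidableEq 𝕜] (hA : A.IsHermitian) (μ : 𝕜) :
    ((A.charpoly.roots.filter (· ≠ μ)).map (μ - ·)).prod =
      ∏ i with (hA.eigenvalues i : 𝕜) ≠ μ, (μ - hA.eigenvalues i) := by
  rw [hA.roots_charpoly_eq_eigenvalues, Multiset.filter_map, Multiset.map_map,
    prod_eq_multiset_prod, filter_val]
  rfl

theorem smul_one_sub_eq_mul_diagonal_mul (hA : A.IsHermitian) (μ : 𝕜) :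
    μ • 1 - A = (hA.eigenvectorUnitary : Matrix n n 𝕜) *
      diagonal (fun i => μ - hA.eigenvalues i) *
        star (hA.eigenvectorUnitary : Matrix n n 𝕜) := by
  have hdiag : diagonal (fun i => μ - hA.eigenvalues i) =
      μ • 1 - diagonal (RCLike.ofReal ∘ hA.eigenvalues) := by
    ext i j
    rcases eq_or_ne i j with rfl | h <;> simp [*]
  conv_lhs => rw [hA.spectral_theorem, Unitary.conjStarAlgAut_apply]
  rw [hdiag, Matrix.mul_sub, Matrix.sub_mul, Matrix.mul_smul, Matrix.mul_one, Matrix.smul_mul,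
    Unitary.mul_star_self_of_mem hA.eigenvectorUnitary.2]

end Matrix.IsHermitian

theorem Matrix.IsHermitian.redComp_smul_one_sub {n : ℕ} {𝕜 : Type*} [RCLike 𝕜]
    [DecidableEq 𝕜] {A : Matrix (Fin n) (Fin n) 𝕜} (hA : A.IsHermitian) (μ : 𝕜) {s : ℕ}
    (e : Fin s ≃ {i // (hA.eigenvalues i : 𝕜) = μ}) :
    redComp s (μ • 1 - A) =
      (∏ i with (hA.eigenvalues i : 𝕜) ≠ μ, (μ - hA.eigenvalues i)) •
      ((hA.eigenvectorUnitary : Matrix (Fin n) (Fin n) 𝕜).submatrix id (fun j => (e j : Fin n)) *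
        (star (hA.eigenvectorUnitary : Matrix (Fin n) (Fin n) 𝕜)).submatrix
          (fun j => (e j : Fin n)) id) := by
  have hs : #{i | μ - hA.eigenvalues i = 0} = s := by
    simp_rw [sub_eq_zero, @eq_comm _ μ]
    rw [← Fintype.card_subtype, Fintype.card_congr e.symm, Fintype.card_fin]
  rw [hA.smul_one_sub_eq_mul_diagonal_mul, redComp_mul_mul s
    (Unitary.mul_star_self_of_mem hA.eigenvectorUnitary.2)
    (Unitary.star_mul_self_of_mem hA.eigenvectorUnitary.2), redComp_diagonal_eq_smul s _ hs,
    Matrix.mul_smul, Matrix.smul_mul]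
  simp_rw [sub_eq_zero, sub_ne_zero, @eq_comm _ μ, @ne_comm _ μ]
  rw [mul_diagonal_ite_mul _ e]

theorem redComp_charmatrix_spectral_form_general {n : ℕ} (H : Matrix (Fin n) (Fin n) ℂ)
    (hH : H.IsHermitian) (lam : ℂ) (s : ℕ)
    (hmul : Polynomial.rootMultiplicity lam (Matrix.charpoly H) = s) :
    (∃ u : Fin s → (Fin n → ℂ),
        (∀ k l : Fin s, (∑ i, conj (u k i) * u l i) = if k = l then 1 else 0) ∧
        (∀ k : Fin s, H.mulVec (u k) = lam • u k) ∧
        redComp s (lam • (1 : Matrix (Fin n) (Fin n) ℂ) - H)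
          = ((((Matrix.charpoly H).roots.filter (fun μ => μ ≠ lam)).map
              (fun μ => lam - μ)).prod)
            • ∑ k : Fin s, Matrix.vecMulVec (u k) (star (u k))) ∧
      (redComp s (lam • (1 : Matrix (Fin n) (Fin n) ℂ) - H)).rank = s ∧
      Submodule.span ℂ
          (Set.range fun j : Fin n =>
            (fun i => redComp s (lam • (1 : Matrix (Fin n) (Fin n) ℂ) - H) i j))
        = Module.End.eigenspace (Matrix.mulVecLin H) lam := by
  -- `RCLike.ofReal` rather than the `Complex.ofReal` coercion, to match the `RCLike` lemmas above
  have hcard : Fintype.card {i // (RCLike.ofReal (hH.eigenvalues i) : ℂ) = lam} = s := by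
    rw [Fintype.card_subtype, hH.card_eigenvalues_eq_rootMultiplicity, hmul]
  let e := (Fintype.equivFinOfCardEq hcard).symm
  set U : Matrix (Fin n) (Fin n) ℂ := ↑hH.eigenvectorUnitary
  set V := U.submatrix id (fun k => (e k : Fin n))
  have hV : Vᴴ * V = 1 := by
    rw [conjTranspose_submatrix, ← submatrix_mul _ _ _ _ _ Function.bijective_id,
      ← star_eq_conjTranspose, Unitary.star_mul_self_of_mem hH.eigenvectorUnitary.2,
      submatrix_one (fun k => (e k : Fin n)) (Subtype.val_injective.comp e.injective)]
  have heig : ∀ k, H *ᵥ V.col k = lam • V.col k := fun k => by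
    change H *ᵥ hH.eigenvectorBasis (e k) = lam • hH.eigenvectorBasis (e k)
    rw [hH.mulVec_eigenvectorBasis, RCLike.real_smul_eq_coe_smul (K := ℂ), (e k).2]
  have hred : redComp s (lam • 1 - H) =
      ((H.charpoly.roots.filter (· ≠ lam)).map (lam - ·)).prod • (V * Vᴴ) := by
    rw [hH.prod_map_sub_filter_roots_charpoly, hH.redComp_smul_one_sub lam e,
      conjTranspose_submatrix, star_eq_conjTranspose]
  have hc : ((H.charpoly.roots.filter (· ≠ lam)).map (lam - ·)).prod ≠ 0 := by
    simp [Multiset.prod_eq_zero_iff, sub_eq_zero]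
  refine ⟨⟨V.col, fun k l => ?_, heig, ?_⟩, ?_, ?_⟩
  · exact (mul_apply ..).symm.trans ((congrFun (congrFun hV k) l).trans (one_apply ..))
  · rw [hred, mul_eq_sum_vecMulVec]
    rfl
  · rw [rank_eq_finrank_span_cols, hred, span_range_col_smul _ hc,
      span_range_col_mul_conjTranspose hV, ← rank_eq_finrank_span_cols,
      rank_eq_card_of_conjTranspose_mul_self_eq_one hV, Fintype.card_fin]
  · change Submodule.span ℂ (Set.range (redComp s (lam • 1 - H)).col) = _
    rw [hred, span_range_col_smul _ hc, span_range_col_mul_conjTranspose hV]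
    exact span_range_col_eq_eigenspace hV heig (by rw [hmul, Fintype.card_fin])

/-- Let `H` be an `n×n` complex Hermitian matrix and `λ` an eigenvalue of `H` of
algebraic multiplicity `s ≥ 1`.  Then there is an orthonormal family
`u : Fin s → (Fin n → ℂ)` of eigenvectors of `H` for `λ` such that
`redComp s (λ•1 - H) = c • ∑ k, vecMulVec (u k) (star (u k))`, where
`c = ∏ (λ - μ)` over the multiset of roots `μ ≠ λ` of the characteristic polynomial
(counted with multiplicity).  In particular `redComp s (λ•1 - H)` has rank exactly
`s` and its columns span the `λ`-eigenspace of `H`. -/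
theorem redComp_charmatrix_spectral_form {n : ℕ} (H : Matrix (Fin n) (Fin n) ℂ)
    (hH : H.IsHermitian) (lam : ℂ) (s : ℕ) (hs : 1 ≤ s)
    (hmul : Polynomial.rootMultiplicity lam (Matrix.charpoly H) = s) :
    (∃ u : Fin s → (Fin n → ℂ),
        (∀ k l : Fin s, (∑ i, conj (u k i) * u l i) = if k = l then 1 else 0) ∧
        (∀ k : Fin s, H.mulVec (u k) = lam • u k) ∧
        redComp s (lam • (1 : Matrix (Fin n) (Fin n) ℂ) - H)
          = ((((Matrix.charpoly H).roots.filter (fun μ => μ ≠ lam)).map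
              (fun μ => lam - μ)).prod)
            • ∑ k : Fin s, Matrix.vecMulVec (u k) (star (u k))) ∧
      (redComp s (lam • (1 : Matrix (Fin n) (Fin n) ℂ) - H)).rank = s ∧
      Submodule.span ℂ
          (Set.range fun j : Fin n =>
            (fun i => redComp s (lam • (1 : Matrix (Fin n) (Fin n) ℂ) - H) i j))
        = Module.End.eigenspace (Matrix.mulVecLin H) lam :=
  redComp_charmatrix_spectral_form_general H hH lam s hmul
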